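/- Suppose that for each η = (η₁, η₂) ∈ [−π, π]², Ψ̃_η : Ω → ℂ is analytic on Ω and satisfies Ψ̃_η(z) = φ_η(z)/φ(z) for all z ∈ Ω ∖ (S + Λ), where φ_η(z) = ∑_{m∈Λ} e^{−i(η₁ m₁ + η₂ m₂)} ϕ(z − m). Then there exist constants β > 0 and C > 0 such that for every η ∈ [−π, π]²: |Ψ̃_η(z)| ≤ C for all z ∈ Ω, and |Ψ̃_η(z) − 1| ≤ C (η₁² + η₂²)^{β/2} for all z ∈ ϖ. -/

import Mathlib

/-!
Write `Ψ_η = N_η / D` with `N_η(z) = ∑ e^{-iη·p} ϕ(z - p)` and `D(z) = ∑ ϕ(z - p)`, `|D| ≥ c`.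
For every lattice point `p` except the one `p₀` with `z - p₀ ∈ [0,1)²`, the point `z - p` lies in
`Ω ∖ Q`, where `|ϕ(w)| ≤ A (1 + |w|)^{-b}` (by the decay hypothesis outside `cl Q`, and by
continuity on the compact boundary of `Q`). So all terms but the `p₀`-th are dominated by a
convergent lattice series `M`, and `|N_η| ≤ |ϕ(z - p₀)| + M`, `|D| ≥ max(c, |ϕ(z - p₀)| - M)`
give `|Ψ_η| ≤ max(3, 3M/c)` however large `ϕ(z - p₀)` is. On `ϖ ⊆ Q` we have `p₀ = 0`, so
`Ψ_η - 1 = ∑ (e^{-iη·p} - 1) ϕ(z - p) / D` with no `p = 0` term, and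
`|e^{-iη·p} - 1| ≤ 2 |η|^β |p|^β` for `β ≤ 1`; taking `β < b - 2` keeps the series convergent.
Both bounds hold off the countable set `S + Λ` and extend to `Ω` and `ϖ` by continuity.
-/
open Complex MeasureTheory Set Filter

noncomputable section

/-- The Gaussian integer lattice point associated to a pair of integers. -/
def latPt (p : ℤ × ℤ) : ℂ := (p.1 : ℂ) + (p.2 : ℂ) * Complex.I

/-- The open unit square `Q = (0,1) × (0,1)` in `ℂ`. -/
def QSet : Set ℂ := {z : ℂ | z.re ∈ Set.Ioo (0:ℝ) 1 ∧ z.im ∈ Set.Ioo (0:ℝ) 1}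

/-- The set `S + Λ` of all translates of points of `S` by lattice points. -/
def SLat (S : Finset ℂ) : Set ℂ := {z : ℂ | ∃ s ∈ S, ∃ p : ℤ × ℤ, z = s + latPt p}

open Function

section TsumRatio

theorem summable_of_norm_le_of_ne {ι E : Type*} [NormedAddCommGroup E] [CompleteSpace E]
    {f : ι → E} {g : ι → ℝ} {i₀ : ι} (hg : Summable g) (hfg : ∀ i ≠ i₀, ‖f i‖ ≤ g i) :
    Summable f :=
  hg.of_norm_bounded_eventually ((eventually_cofinite_ne i₀).mono hfg)

variable {ι 𝕜 : Type*} [NormedField 𝕜] [CompleteSpace 𝕜]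

theorem norm_tsum_mul_div_tsum_le {f e : ι → 𝕜} {g : ι → ℝ} {i₀ : ι} {c : ℝ}
    (hg : Summable g) (hg0 : 0 ≤ g i₀) (hfg : ∀ i ≠ i₀, ‖f i‖ ≤ g i) (he : ∀ i, ‖e i‖ ≤ 1)
    (hc : 0 < c) (hcf : c ≤ ‖∑' i, f i‖) :
    ‖(∑' i, e i * f i) / ∑' i, f i‖ ≤ max 3 (3 * (∑' i, g i) / c) := by
  classical
  set M := ∑' i, g i
  have hG (x : ℝ) : HasSum (update g i₀ x) (x - g i₀ + M) := hg.hasSum.update i₀ x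
  have hef (i : ι) : ‖e i * f i‖ ≤ update g i₀ ‖f i₀‖ i := by
    rcases eq_or_ne i i₀ with rfl | hi
    · simpa [norm_mul] using mul_le_of_le_one_left (norm_nonneg _) (he i)
    · simpa [norm_mul, hi] using
        (mul_le_of_le_one_left (norm_nonneg _) (he i)).trans (hfg i hi)
  have hfupd (i : ι) : ‖update f i₀ 0 i‖ ≤ update g i₀ 0 i := by
    rcases eq_or_ne i i₀ with rfl | hi
    · simp
    · simpa [hi] using hfg i hi
  have hf : Summable f := summable_of_norm_le_of_ne hg hfg
  have hnum : ‖∑' i, e i * f i‖ ≤ ‖f i₀‖ + M := by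
    have := ((Summable.of_norm_bounded (hG _).summable hef).hasSum).norm_le_of_bounded (hG _) hef
    linarith
  have hrest : ‖∑' i, f i - f i₀‖ ≤ M := by
    have := (hf.hasSum.update i₀ 0).norm_le_of_bounded (hG 0) hfupd
    rw [zero_sub, neg_add_eq_sub] at this
    linarith
  have hden : ‖f i₀‖ - M ≤ ‖∑' i, f i‖ := by
    have := norm_sub_le (∑' i, f i) (∑' i, f i - f i₀)
    rw [sub_sub_cancel] at this
    linarith
  rw [norm_div]
  rcases le_or_gt ‖f i₀‖ (2 * M) with h | h
  · calc ‖∑' i, e i * f i‖ / ‖∑' i, f i‖ ≤ 3 * M / c :=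
          div_le_div₀ (by linarith [norm_nonneg (f i₀)]) (by linarith) hc hcf
      _ ≤ _ := le_max_right _ _
  · calc ‖∑' i, e i * f i‖ / ‖∑' i, f i‖ ≤ 3 := by
          rw [div_le_iff₀ (hc.trans_le hcf)]; linarith
      _ ≤ _ := le_max_left _ _

theorem norm_tsum_mul_div_tsum_sub_one_le {f e : ι → 𝕜} {h : ι → ℝ} {c : ℝ} (hf : Summable f)
    (hh : Summable h) (hefh : ∀ i, ‖(e i - 1) * f i‖ ≤ h i) (hc : 0 < c)
    (hcf : c ≤ ‖∑' i, f i‖) :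
    ‖(∑' i, e i * f i) / ∑' i, f i - 1‖ ≤ (∑' i, h i) / c := by
  have hef : Summable fun i => (e i - 1) * f i := Summable.of_norm_bounded hh hefh
  have hD : ∑' i, f i ≠ 0 := norm_pos_iff.1 (hc.trans_le hcf)
  have hsplit : ∑' i, e i * f i = ∑' i, (e i - 1) * f i + ∑' i, f i := by
    rw [← hef.tsum_add hf]
    exact tsum_congr fun i => by ring
  rw [hsplit, add_div, div_self hD, add_sub_cancel_right, norm_div]
  exact div_le_div₀ (tsum_nonneg fun i => (norm_nonneg _).trans (hefh i))
    (hef.hasSum.norm_le_of_bounded hh.hasSum hefh) hc hcf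

end TsumRatio

theorem ContinuousOn.le_of_le_on_inter_dense {X α : Type*} [TopologicalSpace X]
    [TopologicalSpace α] [Preorder α] [ClosedIicTopology α] {U t : Set X} {g : X → α} {C : α}
    (hg : ContinuousOn g U) (hU : IsOpen U) (ht : Dense t) (h : ∀ x ∈ U ∩ t, g x ≤ C)
    {x : X} (hx : x ∈ U) : g x ≤ C :=
  isClosed_Iic.closure_subset <|
    ((hg x hx).mono inter_subset_left).mem_closure (ht.open_subset_closure_inter hU hx) h

section Lattice

@[simp] theorem latPt_re (p : ℤ × ℤ) : (latPt p).re = p.1 := by simp [latPt]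

@[simp] theorem latPt_im (p : ℤ × ℤ) : (latPt p).im = p.2 := by simp [latPt]

@[simp] theorem latPt_zero : latPt 0 = 0 := by simp [latPt]

theorem latPt_sub (p q : ℤ × ℤ) : latPt (p - q) = latPt p - latPt q := by
  simp only [latPt, Prod.fst_sub, Prod.snd_sub, Int.cast_sub]; ring

theorem latPt_neg (p : ℤ × ℤ) : latPt (-p) = -latPt p := by
  simpa using latPt_sub 0 p

theorem summable_one_add_norm_latPt_rpow {s : ℝ} (hs : 2 < s) :
    Summable fun p : ℤ × ℤ => (1 + ‖latPt p‖) ^ (-s) := by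
  have h := EisensteinSeries.summable_one_div_norm_rpow hs
  rw [← (finTwoArrowEquiv ℤ).symm.summable_iff] at h
  refine h.of_norm_bounded_eventually ((eventually_cofinite_ne 0).mono fun p hp => ?_)
  set x : Fin 2 → ℤ := (finTwoArrowEquiv ℤ).symm p
  have hx : 0 < ‖x‖ := norm_pos_iff.2 fun h0 => hp (by simpa [x, Prod.ext_iff] using h0)
  have hxp : ‖x‖ ≤ ‖latPt p‖ := by
    refine (pi_norm_le_iff_of_nonneg (norm_nonneg _)).2 fun i => ?_
    fin_cases i
    · simpa [x, Int.norm_eq_abs] using abs_re_le_norm (latPt p)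
    · simpa [x, Int.norm_eq_abs] using abs_im_le_norm (latPt p)
  rw [Real.norm_of_nonneg (by positivity)]
  exact Real.rpow_le_rpow_of_nonpos hx (by linarith) (by linarith)

theorem dense_compl_SLat (S : Finset ℂ) : Dense (SLat S)ᶜ := by
  refine Set.Countable.dense_compl ℝ <|
    (S.countable_toSet.image2 (countable_range latPt) (· + ·)).mono ?_
  rintro _ ⟨s, hs, p, rfl⟩
  exact ⟨s, hs, _, ⟨p, rfl⟩, rfl⟩

end Lattice

section UnitSquare

theorem isOpen_QSet : IsOpen QSet :=
  (isOpen_Ioo.preimage continuous_re).inter (isOpen_Ioo.preimage continuous_im)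

theorem closure_QSet_subset_closedBall : closure QSet ⊆ Metric.closedBall 0 2 := by
  refine closure_minimal (fun z ⟨⟨h1, h2⟩, h3, h4⟩ => ?_) Metric.isClosed_closedBall
  rw [mem_closedBall_zero_iff]
  linarith [norm_le_abs_re_add_abs_im z, abs_of_pos h1, abs_of_pos h3]

theorem isCompact_closure_QSet_diff : IsCompact (closure QSet \ QSet) :=
  ((isCompact_closedBall 0 2).of_isClosed_subset isClosed_closure
    closure_QSet_subset_closedBall).diff isOpen_QSet

def floorPt (z : ℂ) : ℤ × ℤ := (⌊z.re⌋, ⌊z.im⌋)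

theorem eq_floorPt_of_sub_mem_QSet {z : ℂ} {p : ℤ × ℤ} (h : z - latPt p ∈ QSet) :
    p = floorPt z := by
  obtain ⟨⟨h1, h2⟩, h3, h4⟩ := h
  simp only [sub_re, sub_im, latPt_re, latPt_im] at h1 h2 h3 h4
  refine Prod.ext ?_ ?_ <;> simp only [floorPt] <;> rw [eq_comm, Int.floor_eq_iff] <;>
    constructor <;> linarith

theorem norm_sub_latPt_floorPt_le (z : ℂ) : ‖z - latPt (floorPt z)‖ ≤ 2 := by
  refine (norm_le_abs_re_add_abs_im _).trans ?_
  simp only [sub_re, sub_im, latPt_re, latPt_im, floorPt, Int.self_sub_floor]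
  rw [abs_of_nonneg (Int.fract_nonneg _), abs_of_nonneg (Int.fract_nonneg _)]
  linarith [Int.fract_lt_one z.re, Int.fract_lt_one z.im]

end UnitSquare

section Decay

variable {Ω : Set ℂ} {ϕ : ℂ → ℂ} {A b : ℝ}

theorem exists_norm_le_rpow_of_notMem_QSet {d : ℝ}
    (hcont : ContinuousOn ϕ (closure QSet \ QSet)) (hb : 0 ≤ b)
    (hdecay : ∀ z ∈ Ω, z ∉ closure QSet → (1 + ‖z‖) ^ b * ‖ϕ z‖ ≤ d) :
    ∃ A, 0 ≤ A ∧ ∀ w ∈ Ω, w ∉ QSet → ‖ϕ w‖ ≤ A * (1 + ‖w‖) ^ (-b) := by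
  obtain ⟨M, hM⟩ := isCompact_closure_QSet_diff.exists_bound_of_continuousOn hcont
  have hM0 : 0 ≤ 3 ^ b * max M 0 := by positivity
  refine ⟨max d (3 ^ b * max M 0), hM0.trans (le_max_right _ _), fun w hw hwQ => ?_⟩
  have hw1 : 0 < 1 + ‖w‖ := by positivity
  rw [Real.rpow_neg hw1.le, ← div_eq_mul_inv, le_div_iff₀ (by positivity), mul_comm]
  by_cases hwc : w ∈ closure QSet
  · have hw2 : ‖w‖ ≤ 2 := mem_closedBall_zero_iff.1 (closure_QSet_subset_closedBall hwc)
    calc (1 + ‖w‖) ^ b * ‖ϕ w‖ ≤ 3 ^ b * max M 0 :=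
          mul_le_mul (Real.rpow_le_rpow hw1.le (by linarith) hb)
            ((hM w ⟨hwc, hwQ⟩).trans (le_max_left _ _)) (norm_nonneg _) (by positivity)
      _ ≤ _ := le_max_right _ _
  · exact (hdecay w hw hwc).trans (le_max_left _ _)

theorem norm_apply_sub_latPt_le_of_ne_floorPt (hper : ∀ z ∈ Ω, ∀ p : ℤ × ℤ, z + latPt p ∈ Ω)
    (hA0 : 0 ≤ A) (hb : 0 ≤ b) (hA : ∀ w ∈ Ω, w ∉ QSet → ‖ϕ w‖ ≤ A * (1 + ‖w‖) ^ (-b))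
    {z : ℂ} (hz : z ∈ Ω) {p : ℤ × ℤ} (hp : p ≠ floorPt z) :
    ‖ϕ (z - latPt p)‖ ≤ 3 ^ b * A * (1 + ‖latPt (p - floorPt z)‖) ^ (-b) := by
  have hmem : z - latPt p ∈ Ω := by simpa [latPt_neg, sub_eq_add_neg] using hper z hz (-p)
  have hnot : z - latPt p ∉ QSet := fun h => hp (eq_floorPt_of_sub_mem_QSet h)
  have hdist : 1 + ‖latPt (p - floorPt z)‖ ≤ 3 * (1 + ‖z - latPt p‖) := by
    have := norm_sub_le (z - latPt (floorPt z)) (z - latPt p)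
    rw [show z - latPt (floorPt z) - (z - latPt p) = latPt (p - floorPt z) by
      rw [latPt_sub]; ring] at this
    linarith [norm_sub_latPt_floorPt_le z, norm_nonneg (z - latPt p)]
  calc ‖ϕ (z - latPt p)‖ ≤ A * (1 + ‖z - latPt p‖) ^ (-b) := hA _ hmem hnot
    _ ≤ A * ((1 + ‖latPt (p - floorPt z)‖) / 3) ^ (-b) := by
        refine mul_le_mul_of_nonneg_left ?_ hA0
        exact Real.rpow_le_rpow_of_nonpos (by positivity) (by linarith) (by linarith)
    _ = 3 ^ b * A * (1 + ‖latPt (p - floorPt z)‖) ^ (-b) := by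
        rw [Real.div_rpow (by positivity) (by norm_num), Real.rpow_neg (by norm_num : (0:ℝ) ≤ 3)]
        field_simp

end Decay

section Character

def latChar (η : ℝ × ℝ) (p : ℤ × ℤ) : ℂ :=
  Complex.exp (-Complex.I * Complex.ofReal (η.1 * (latPt p).re + η.2 * (latPt p).im))

theorem latChar_eq_exp_I_mul (η : ℝ × ℝ) (p : ℤ × ℤ) :
    latChar η p = Complex.exp (Complex.I * ↑(-(η.1 * (latPt p).re + η.2 * (latPt p).im))) := by
  rw [latChar, ofReal_neg, mul_neg, neg_mul]

theorem norm_latChar (η : ℝ × ℝ) (p : ℤ × ℤ) : ‖latChar η p‖ = 1 := by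
  rw [latChar_eq_exp_I_mul, mul_comm, norm_exp_ofReal_mul_I]

@[simp] theorem latChar_zero (η : ℝ × ℝ) : latChar η 0 = 1 := by simp [latChar]

theorem norm_latChar_sub_one_le (η : ℝ × ℝ) (p : ℤ × ℤ) {β : ℝ} (hβ0 : 0 ≤ β) (hβ1 : β ≤ 1) :
    ‖latChar η p - 1‖ ≤ 2 * (η.1 ^ 2 + η.2 ^ 2) ^ (β / 2) * ‖latPt p‖ ^ β := by
  set θ := η.1 * (latPt p).re + η.2 * (latPt p).im
  have hθ : |θ| ≤ √(η.1 ^ 2 + η.2 ^ 2) * ‖latPt p‖ := by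
    rw [← Real.sqrt_sq (norm_nonneg (latPt p)), ← Real.sqrt_mul (by positivity)]
    refine Real.abs_le_sqrt ?_
    rw [Complex.sq_norm, normSq_apply]
    nlinarith [sq_nonneg (η.1 * (latPt p).im - η.2 * (latPt p).re)]
  have hexp : ‖latChar η p - 1‖ ≤ 2 * |θ| ^ β := by
    have h0 : 0 ≤ |θ| ^ β := by positivity
    rcases le_total |θ| 1 with h | h
    · calc ‖latChar η p - 1‖ ≤ ‖-θ‖ := by
            rw [latChar_eq_exp_I_mul]; exact Real.norm_exp_I_mul_ofReal_sub_one_le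
        _ = |θ| := by rw [norm_neg, Real.norm_eq_abs]
        _ ≤ |θ| ^ β := Real.self_le_rpow_of_le_one (abs_nonneg θ) h hβ1
        _ ≤ 2 * |θ| ^ β := by linarith
    · calc ‖latChar η p - 1‖ ≤ ‖latChar η p‖ + ‖(1 : ℂ)‖ := norm_sub_le _ _
        _ = 2 := by rw [norm_latChar, norm_one]; norm_num
        _ ≤ 2 * |θ| ^ β := by linarith [Real.one_le_rpow h hβ0]
  calc ‖latChar η p - 1‖ ≤ 2 * |θ| ^ β := hexp
    _ ≤ 2 * (√(η.1 ^ 2 + η.2 ^ 2) * ‖latPt p‖) ^ β := by gcongr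
    _ = 2 * (η.1 ^ 2 + η.2 ^ 2) ^ (β / 2) * ‖latPt p‖ ^ β := by
        rw [Real.mul_rpow (by positivity) (norm_nonneg _), Real.sqrt_eq_rpow,
          ← Real.rpow_mul (by positivity), one_div_mul_eq_div, mul_assoc]

variable {ϕ : ℂ → ℂ} {z : ℂ} {A b c : ℝ}

theorem norm_tsum_latChar_mul_div_le (η : ℝ × ℝ) {p₀ : ℤ × ℤ} (hA : 0 ≤ A) (hb : 2 < b)
    (hϕ : ∀ p ≠ p₀, ‖ϕ (z - latPt p)‖ ≤ A * (1 + ‖latPt (p - p₀)‖) ^ (-b)) (hc : 0 < c)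
    (hcz : c ≤ ‖∑' p : ℤ × ℤ, ϕ (z - latPt p)‖) :
    ‖(∑' p, latChar η p * ϕ (z - latPt p)) / ∑' p : ℤ × ℤ, ϕ (z - latPt p)‖ ≤
      max 3 (3 * (A * ∑' q : ℤ × ℤ, (1 + ‖latPt q‖) ^ (-b)) / c) := by
  have hshift : ∑' p, A * (1 + ‖latPt (p - p₀)‖) ^ (-b) =
      A * ∑' q : ℤ × ℤ, (1 + ‖latPt q‖) ^ (-b) := by
    rw [tsum_mul_left, ← (Equiv.subRight p₀).tsum_eq fun q => (1 + ‖latPt q‖) ^ (-b)]; rfl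
  rw [← hshift]
  exact norm_tsum_mul_div_tsum_le
    (((Equiv.subRight p₀).summable_iff.2 (summable_one_add_norm_latPt_rpow hb)).mul_left A)
    (by positivity) hϕ (fun p => (norm_latChar η p).le) hc hcz

theorem norm_tsum_latChar_mul_div_sub_one_le (η : ℝ × ℝ) {β : ℝ} (hA : 0 ≤ A) (hβ0 : 0 ≤ β)
    (hβ1 : β ≤ 1) (hβb : 2 < b - β)
    (hϕ : ∀ p ≠ 0, ‖ϕ (z - latPt p)‖ ≤ A * (1 + ‖latPt p‖) ^ (-b)) (hc : 0 < c)
    (hcz : c ≤ ‖∑' p : ℤ × ℤ, ϕ (z - latPt p)‖) :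
    ‖(∑' p, latChar η p * ϕ (z - latPt p)) / ∑' p : ℤ × ℤ, ϕ (z - latPt p) - 1‖ ≤
      2 * A * (∑' q : ℤ × ℤ, (1 + ‖latPt q‖) ^ (-(b - β))) / c * (η.1 ^ 2 + η.2 ^ 2) ^ (β / 2) := by
  set r := (η.1 ^ 2 + η.2 ^ 2) ^ (β / 2)
  have hbound (p : ℤ × ℤ) : ‖(latChar η p - 1) * ϕ (z - latPt p)‖ ≤
      2 * A * r * (1 + ‖latPt p‖) ^ (-(b - β)) := by
    rcases eq_or_ne p 0 with rfl | hp
    · simp only [latChar_zero, sub_self, zero_mul, norm_zero]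
      positivity
    set t := ‖latPt p‖
    rw [norm_mul]
    calc ‖latChar η p - 1‖ * ‖ϕ (z - latPt p)‖ ≤ (2 * r * t ^ β) * (A * (1 + t) ^ (-b)) :=
          mul_le_mul (norm_latChar_sub_one_le η p hβ0 hβ1) (hϕ p hp) (norm_nonneg _)
            (by positivity)
      _ ≤ (2 * r * (1 + t) ^ β) * (A * (1 + t) ^ (-b)) := by
          gcongr
          linarith
      _ = 2 * A * r * (1 + t) ^ (-(b - β)) := by
          rw [neg_sub, sub_eq_add_neg, add_comm β, Real.rpow_add (by positivity)]
          ring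
  have hϕsum : Summable fun p : ℤ × ℤ => ϕ (z - latPt p) :=
    summable_of_norm_le_of_ne ((summable_one_add_norm_latPt_rpow (by linarith)).mul_left A) hϕ
  calc _ ≤ (∑' p : ℤ × ℤ, 2 * A * r * (1 + ‖latPt p‖) ^ (-(b - β))) / c :=
        norm_tsum_mul_div_tsum_sub_one_le hϕsum
          ((summable_one_add_norm_latPt_rpow hβb).mul_left _) hbound hc hcz
    _ = _ := by rw [tsum_mul_left]; ring

end Character

theorem stmt7_general
    (Ω : Set ℂ) (hΩopen : IsOpen Ω)
    (hper : ∀ z ∈ Ω, ∀ p : ℤ × ℤ, z + latPt p ∈ Ω)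
    (S : Finset ℂ) (hSQ : (S : Set ℂ) ⊆ QSet)
    (ϕ : ℂ → ℂ)
    (hana : AnalyticOnNhd ℂ ϕ ((S : Set ℂ)ᶜ))
    (b d : ℝ) (hb : 2 < b)
    (hdecay : ∀ z ∈ Ω, z ∉ closure QSet →
      (1 + ‖z‖) ^ b * ‖ϕ z‖ ≤ d)
    (hlb : ∃ c > (0:ℝ), ∀ z ∈ Ω \ SLat S,
      c ≤ ‖∑' p : ℤ × ℤ, ϕ (z - latPt p)‖)
    (ϖ : Set ℂ) (hϖopen : IsOpen ϖ) (hϖQ : ϖ ⊆ QSet) (hϖΩ : ϖ ⊆ Ω)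
    (Ψ : ℝ × ℝ → ℂ → ℂ)
    (hΨana : ∀ η ∈ Set.Icc ((-Real.pi, -Real.pi) : ℝ × ℝ) (Real.pi, Real.pi),
      AnalyticOnNhd ℂ (Ψ η) Ω)
    (hΨeq : ∀ η ∈ Set.Icc ((-Real.pi, -Real.pi) : ℝ × ℝ) (Real.pi, Real.pi),
      ∀ z ∈ Ω \ SLat S,
        Ψ η z = (∑' p : ℤ × ℤ, Complex.exp (-Complex.I * Complex.ofReal (η.1 * (latPt p).re + η.2 * (latPt p).im)) * ϕ (z - latPt p)) /
          (∑' p : ℤ × ℤ, ϕ (z - latPt p))) :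
    ∃ β > (0:ℝ), ∃ C > (0:ℝ),
      ∀ η ∈ Set.Icc ((-Real.pi, -Real.pi) : ℝ × ℝ) (Real.pi, Real.pi),
        (∀ z ∈ Ω, ‖Ψ η z‖ ≤ C) ∧
        (∀ z ∈ ϖ, ‖Ψ η z - 1‖ ≤ C * (η.1 ^ 2 + η.2 ^ 2) ^ (β / 2)) := by
  obtain ⟨c, hc, hlb⟩ := hlb
  obtain ⟨A, hA0, hA⟩ := exists_norm_le_rpow_of_notMem_QSet
    (hana.continuousOn.mono fun w hw hwS => hw.2 (hSQ hwS)) (by linarith) hdecay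
  have hϕ {z : ℂ} (hz : z ∈ Ω) (p : ℤ × ℤ) (hp : p ≠ floorPt z) :=
    norm_apply_sub_latPt_le_of_ne_floorPt hper hA0 (by linarith) hA hz hp
  set β := min 1 ((b - 2) / 2)
  have hβ0 : 0 < β := lt_min one_pos (by linarith)
  have hβb : 2 < b - β := by linarith [min_le_right 1 ((b - 2) / 2)]
  set C₁ := max 3 (3 * (3 ^ b * A * ∑' q : ℤ × ℤ, (1 + ‖latPt q‖) ^ (-b)) / c)
  set C₂ := 2 * (3 ^ b * A) * (∑' q : ℤ × ℤ, (1 + ‖latPt q‖) ^ (-(b - β))) / c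
  have hC : 0 < max C₁ C₂ := three_pos.trans_le ((le_max_left _ _).trans (le_max_left _ _))
  refine ⟨β, hβ0, max C₁ C₂, hC, fun η hη => ⟨fun z hz => ?_, fun z hz => ?_⟩⟩
  · refine (hΨana η hη).continuousOn.norm.le_of_le_on_inter_dense hΩopen (dense_compl_SLat S)
      (fun w hw => ?_) hz
    rw [hΨeq η hη w hw]
    exact (norm_tsum_latChar_mul_div_le η (by positivity) hb (hϕ hw.1) hc (hlb w hw)).trans
      (le_max_left _ _)
  · have hcont : ContinuousOn (fun w => ‖Ψ η w - 1‖) ϖ :=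
      (((hΨana η hη).continuousOn.mono hϖΩ).sub continuousOn_const).norm
    refine hcont.le_of_le_on_inter_dense hϖopen (dense_compl_SLat S) (fun w hwϖ => ?_) hz
    have hw : w ∈ Ω \ SLat S := ⟨hϖΩ hwϖ.1, hwϖ.2⟩
    have hw0 : floorPt w = 0 := (eq_floorPt_of_sub_mem_QSet (by simpa using hϖQ hwϖ.1)).symm
    rw [hΨeq η hη w hw]
    refine (norm_tsum_latChar_mul_div_sub_one_le η (A := 3 ^ b * A) (by positivity) hβ0.le
      (min_le_left _ _) hβb (fun p hp => by simpa [hw0] using hϕ hw.1 p (hw0 ▸ hp)) hc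
      (hlb w hw)).trans ?_
    gcongr
    exact le_max_right _ _

/-- uniform boundedness of `Ψ̃_η` on `Ω` and the Hölder-type estimate
`|Ψ̃_η - 1| ≤ C|η|^β` on the periodic cell `ϖ`. -/
theorem stmt7
    (Ω : Set ℂ) (hΩopen : IsOpen Ω) (hΩne : Ω.Nonempty)
    (hper : ∀ z ∈ Ω, ∀ p : ℤ × ℤ, z + latPt p ∈ Ω)
    (S : Finset ℂ) (hSQ : (S : Set ℂ) ⊆ QSet)
    (ϕ : ℂ → ℂ) (hmero : MeromorphicOn ϕ Set.univ)
    (hana : AnalyticOnNhd ℂ ϕ ((S : Set ℂ)ᶜ))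
    (b d : ℝ) (hb : 2 < b) (hd : 0 ≤ d)
    (hdecay : ∀ z ∈ Ω, z ∉ closure QSet →
      (1 + ‖z‖) ^ b * ‖ϕ z‖ ≤ d)
    (hsum : ∀ z ∈ Ω \ SLat S,
      Summable (fun p : ℤ × ℤ => ‖ϕ (z - latPt p)‖))
    (hnz : ∀ z ∈ closure Ω \ SLat S, (∑' p : ℤ × ℤ, ϕ (z - latPt p)) ≠ 0)
    (hlb : ∃ c > (0:ℝ), ∀ z ∈ Ω \ SLat S,
      c ≤ ‖∑' p : ℤ × ℤ, ϕ (z - latPt p)‖)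
    (ϖ : Set ℂ) (hϖopen : IsOpen ϖ) (hϖne : ϖ.Nonempty) (hϖQ : ϖ ⊆ QSet) (hϖΩ : ϖ ⊆ Ω)
    (Ψ : ℝ × ℝ → ℂ → ℂ)
    (hΨana : ∀ η ∈ Set.Icc ((-Real.pi, -Real.pi) : ℝ × ℝ) (Real.pi, Real.pi),
      AnalyticOnNhd ℂ (Ψ η) Ω)
    (hΨeq : ∀ η ∈ Set.Icc ((-Real.pi, -Real.pi) : ℝ × ℝ) (Real.pi, Real.pi),
      ∀ z ∈ Ω \ SLat S,
        Ψ η z = (∑' p : ℤ × ℤ, Complex.exp (-Complex.I * Complex.ofReal (η.1 * (latPt p).re + η.2 * (latPt p).im)) * ϕ (z - latPt p)) /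
          (∑' p : ℤ × ℤ, ϕ (z - latPt p))) :
    ∃ β > (0:ℝ), ∃ C > (0:ℝ),
      ∀ η ∈ Set.Icc ((-Real.pi, -Real.pi) : ℝ × ℝ) (Real.pi, Real.pi),
        (∀ z ∈ Ω, ‖Ψ η z‖ ≤ C) ∧
        (∀ z ∈ ϖ, ‖Ψ η z - 1‖ ≤ C * (η.1 ^ 2 + η.2 ^ 2) ^ (β / 2)) :=
  stmt7_general Ω hΩopen hper S hSQ ϕ hana b d hb hdecay hlb ϖ hϖopen hϖQ hϖΩ Ψ hΨana hΨeq
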